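/- If x and A are hereditarily finite sets and F(n, x) ∈ F(n+1, A) holds for every natural number n, then x ∈ A. -/
import Mathlib


open ZFSet

/-- The approximation function: `F 0 A = ∅`, `F (n+1) A = {F n x | x ∈ A}`. -/
noncomputable def F : ℕ → ZFSet → ZFSet
  | 0, _ => ∅
  | n + 1, A => @ZFSet.image (F n) (Classical.allZFSetDefinable fun s => F n (s 0)) A

theorem mem_F_succ {n : ℕ} {A z : ZFSet} : z ∈ F (n + 1) A ↔ ∃ w ∈ A, F n w = z :=
  @ZFSet.mem_image (F n) (Classical.allZFSetDefinable fun s => F n (s 0)) A z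

theorem F_inj : ∀ (n : ℕ) (x y : ZFSet), x.rank < (n : Ordinal) →
    y.rank < (n : Ordinal) → F n x = F n y → x = y := by
  intro n
  induction n with
  | zero => intro x y hx _ _; exact absurd hx (by simp)
  | succ n ih =>
    intro x y hx hy hF
    have hx' : x.rank ≤ (n : Ordinal) := by
      have := hx
      rw [Nat.cast_succ, Ordinal.add_one_eq_succ, Order.lt_succ_iff] at this
      exact this
    have hy' : y.rank ≤ (n : Ordinal) := by
      have := hy
      rw [Nat.cast_succ, Ordinal.add_one_eq_succ, Order.lt_succ_iff] at this
      exact this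
    have key : ∀ a b : ZFSet, a.rank ≤ (n : Ordinal) → b.rank ≤ (n : Ordinal) →
        F (n+1) a = F (n+1) b → ∀ z ∈ a, z ∈ b := by
      intro a b ha hb hab z hz
      have : F n z ∈ F (n + 1) b := by
        rw [← hab]; exact mem_F_succ.mpr ⟨z, hz, rfl⟩
      rw [mem_F_succ] at this
      obtain ⟨w, hwb, hw⟩ := this
      have hzr : z.rank < (n : Ordinal) := lt_of_lt_of_le (ZFSet.rank_lt_of_mem hz) ha
      have hwr : w.rank < (n : Ordinal) := lt_of_lt_of_le (ZFSet.rank_lt_of_mem hwb) hb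
      rwa [ih w z hwr hzr hw] at hwb
    exact ZFSet.ext fun z => ⟨key x y hx' hy' hF z, key y x hy' hx' hF.symm z⟩

theorem stmt_12 (x A : ZFSet) (hx : ∃ k : ℕ, x.rank = (k : Ordinal))
    (hA : ∃ k : ℕ, A.rank = (k : Ordinal))
    (h : ∀ n : ℕ, F n x ∈ F (n + 1) A) : x ∈ A := by
  obtain ⟨k, hk⟩ := hx
  obtain ⟨m, hm⟩ := hA
  set n := max k m + 1 with hn
  have hx' : x.rank < (n : Ordinal) := by
    rw [hk]
    exact_mod_cast Nat.lt_succ_of_le (le_max_left k m)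
  have hA' : A.rank ≤ (n : Ordinal) := by
    rw [hm]
    exact_mod_cast le_of_lt (Nat.lt_succ_of_le (le_max_right k m))
  have := h n
  rw [mem_F_succ] at this
  obtain ⟨y, hyA, hy⟩ := this
  have hy' : y.rank < (n : Ordinal) := lt_of_lt_of_le (ZFSet.rank_lt_of_mem hyA) hA'
  rwa [F_inj n y x hy' hx' hy] at hyA
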